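/- Let p > 0 and N ≥ 2. Define F on the open set U = {x ∈ ℝ^N : x₁ < x₂ < ⋯ < x_N} by F(x) = Σᵢ₌₁^N log rᵢᵖ(x), where rᵢᵖ(x) = min_p(Δxᵢ, Δxᵢ₊₁) for 2 ≤ i ≤ N−1, r₁ᵖ(x) = 2^{1/p} Δx₂ and r_Nᵖ(x) = 2^{1/p} Δx_N, with Δxᵢ = xᵢ − xᵢ₋₁. Then F is differentiable on U and for every x ∈ U, Σᵢ₌₁^N xᵢ · (∂F/∂xᵢ)(x) = N. -/

import Mathlib

open Real Finset

/-- `rᵢᵖ = min_p(Δxᵢ, Δxᵢ₊₁) = ((Δxᵢ^{−p} + Δxᵢ₊₁^{−p})/2)^{−1/p}`, with the boundary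
convention `r₁ᵖ = 2^{1/p} Δx₂` and `r_Nᵖ = 2^{1/p} Δx_N`, for `N = n + 2` particles
indexed from `0` to `n+1`. -/
noncomputable def rballp (p : ℝ) (n : ℕ) (x : Fin (n + 2) → ℝ) (i : Fin (n + 2)) : ℝ :=
  if i.val = 0 then (2 : ℝ) ^ (1 / p) * (x 1 - x 0)
  else if i.val = n + 1 then (2 : ℝ) ^ (1 / p) * (x i - x (i - 1))
  else (((x i - x (i - 1)) ^ (-p) + (x (i + 1) - x i) ^ (-p)) / 2) ^ (-1 / p)

/-- `F(x) = Σᵢ log rᵢᵖ(x)`. -/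
noncomputable def logRadiiSum (p : ℝ) (n : ℕ) (x : Fin (n + 2) → ℝ) : ℝ :=
  ∑ i, Real.log (rballp p n x i)

/-!
Every radius `rᵢᵖ` is positively homogeneous of degree one in `x` (a difference of coordinates
at the boundary, a `p`-mean of two differences inside), so `F (t • x) = F x + N log t` for
`t > 0`. Differentiating at `t = 1` gives `dF(x) x = N`, and `dF(x) x = Σᵢ xᵢ ∂F/∂xᵢ(x)`.
-/

theorem fderiv_apply_self_eq_of_log_homogeneous {E : Type*} [NormedAddCommGroup E]
    [NormedSpace ℝ E] {f : E → ℝ} {x : E} {k : ℝ} (hf : DifferentiableAt ℝ f x)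
    (hhom : ∀ t : ℝ, 0 < t → f (t • x) = f x + k * log t) :
    fderiv ℝ f x x = k := by
  have hchain : HasDerivAt (fun t : ℝ => f (t • x)) (fderiv ℝ f x x) 1 := by
    have hline : HasDerivAt (fun t : ℝ => t • x) x 1 := by
      simpa using (hasDerivAt_id (1 : ℝ)).smul_const x
    have hf1 : HasFDerivAt f (fderiv ℝ f x) ((1 : ℝ) • x) := by
      rw [one_smul]
      exact hf.hasFDerivAt
    exact hf1.comp_hasDerivAt (l := f) (f := fun t : ℝ => t • x) 1 hline
  have hlog : HasDerivAt (fun t : ℝ => f (t • x)) k 1 := by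
    have h : HasDerivAt (fun t => f x + k * log t) k 1 := by
      simpa using ((hasDerivAt_log one_ne_zero).const_mul k).const_add (f x)
    refine h.congr_of_eventuallyEq ?_
    filter_upwards [lt_mem_nhds zero_lt_one] with t ht using hhom t ht
  exact hchain.unique hlog

theorem sum_mul_apply_single {ι : Type*} [Fintype ι] [DecidableEq ι]
    (L : (ι → ℝ) →L[ℝ] ℝ) (x : ι → ℝ) : ∑ i, x i * L (Pi.single i 1) = L x := by
  conv_rhs => rw [← Finset.univ_sum_single x]
  rw [map_sum]
  refine sum_congr rfl fun i _ => ?_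
  rw [← smul_eq_mul, ← map_smul, ← Pi.single_smul', smul_eq_mul, mul_one]

noncomputable def minp (p a b : ℝ) : ℝ := ((a ^ (-p) + b ^ (-p)) / 2) ^ (-1 / p)

lemma minp_pos (p : ℝ) {a b : ℝ} (ha : 0 < a) (hb : 0 < b) : 0 < minp p a b := by
  have := rpow_pos_of_pos ha (-p)
  have := rpow_pos_of_pos hb (-p)
  unfold minp
  positivity

lemma minp_mul_mul {p : ℝ} (hp : p ≠ 0) {t a b : ℝ} (ht : 0 < t) (ha : 0 < a) (hb : 0 < b) :
    minp p (t * a) (t * b) = t * minp p a b := by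
  have := rpow_pos_of_pos ha (-p)
  have := rpow_pos_of_pos hb (-p)
  unfold minp
  rw [mul_rpow ht.le ha.le, mul_rpow ht.le hb.le, ← mul_add, mul_div_assoc,
    mul_rpow (rpow_pos_of_pos ht _).le (by positivity), ← rpow_mul ht.le,
    show -p * (-1 / p) = 1 by field_simp, rpow_one]

lemma DifferentiableAt.minp {E : Type*} [NormedAddCommGroup E] [NormedSpace ℝ E]
    {f g : E → ℝ} {x : E} (p : ℝ) (hf : DifferentiableAt ℝ f x) (hg : DifferentiableAt ℝ g x)
    (hfx : 0 < f x) (hgx : 0 < g x) :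
    DifferentiableAt ℝ (fun y => minp p (f y) (g y)) x := by
  have hmean : DifferentiableAt ℝ (fun y => (f y ^ (-p) + g y ^ (-p)) / 2) x := by
    simp only [div_eq_mul_inv]
    exact ((hf.rpow_const (Or.inl hfx.ne')).add (hg.rpow_const (Or.inl hgx.ne'))).mul_const _
  refine hmean.rpow_const (Or.inl ?_)
  have := rpow_pos_of_pos hfx (-p)
  have := rpow_pos_of_pos hgx (-p)
  positivity

section StrictMono

variable {n : ℕ} {x : Fin (n + 2) → ℝ}

lemma StrictMono.sub_pred_pos (hx : StrictMono x) {i : Fin (n + 2)} (hi : i.val ≠ 0) :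
    0 < x i - x (i - 1) :=
  sub_pos.2 (hx (Fin.sub_one_lt_iff.2 (Fin.pos_iff_ne_zero.2 (Fin.val_ne_zero_iff.1 hi))))

lemma StrictMono.succ_sub_pos (hx : StrictMono x) {i : Fin (n + 2)} (hi : i.val ≠ n + 1) :
    0 < x (i + 1) - x i :=
  sub_pos.2 <| hx <| Fin.lt_add_one_iff.2 <|
    Fin.lt_last_iff_ne_last.2 (by simpa [Fin.ext_iff] using hi)

variable {p : ℝ}

lemma rballp_pos (hx : StrictMono x) (i : Fin (n + 2)) : 0 < rballp p n x i := by
  unfold rballp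
  split_ifs with h0 hlast
  · exact mul_pos (rpow_pos_of_pos two_pos _) (sub_pos.2 (hx Fin.zero_lt_one))
  · exact mul_pos (rpow_pos_of_pos two_pos _) (hx.sub_pred_pos h0)
  · exact minp_pos p (hx.sub_pred_pos h0) (hx.succ_sub_pos hlast)

lemma differentiableAt_rballp (hx : StrictMono x) (i : Fin (n + 2)) :
    DifferentiableAt ℝ (fun y => rballp p n y i) x := by
  have hcoord (j : Fin (n + 2)) : DifferentiableAt ℝ (fun y : Fin (n + 2) → ℝ => y j) x :=
    differentiableAt_apply j x
  unfold rballp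
  split_ifs with h0 hlast
  · exact ((hcoord 1).sub (hcoord 0)).const_mul _
  · exact ((hcoord i).sub (hcoord (i - 1))).const_mul _
  · exact ((hcoord i).sub (hcoord (i - 1))).minp p ((hcoord (i + 1)).sub (hcoord i))
      (hx.sub_pred_pos h0) (hx.succ_sub_pos hlast)

lemma rballp_smul (hp : p ≠ 0) (hx : StrictMono x) {t : ℝ} (ht : 0 < t) (i : Fin (n + 2)) :
    rballp p n (t • x) i = t * rballp p n x i := by
  simp only [rballp, Pi.smul_apply, smul_eq_mul, ← mul_sub]
  split_ifs with h0 hlast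
  · ring
  · ring
  · exact minp_mul_mul hp ht (hx.sub_pred_pos h0) (hx.succ_sub_pos hlast)

lemma differentiableAt_logRadiiSum (hx : StrictMono x) :
    DifferentiableAt ℝ (logRadiiSum p n) x := by
  unfold logRadiiSum
  exact DifferentiableAt.fun_sum fun i _ =>
    (differentiableAt_rballp hx i).log (rballp_pos hx i).ne'

lemma logRadiiSum_smul (hp : p ≠ 0) (hx : StrictMono x) {t : ℝ} (ht : 0 < t) :
    logRadiiSum p n (t • x) = logRadiiSum p n x + ((n : ℝ) + 2) * log t := by
  simp only [logRadiiSum, rballp_smul hp hx ht,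
    log_mul ht.ne' (rballp_pos hx _).ne', sum_add_distrib, sum_const, card_univ,
    Fintype.card_fin, nsmul_eq_mul]
  push_cast
  ring

end StrictMono

/-- for `p > 0` and `N ≥ 2`, the function `F(x) = Σᵢ log rᵢᵖ(x)` is
differentiable on the open set `U = {x : x₁ < ⋯ < x_N}` and satisfies the Euler identity
`Σᵢ xᵢ ∂F/∂xᵢ(x) = N` on `U`. -/
theorem logRadiiSum_euler_identity (p : ℝ) (hp : 0 < p) (n : ℕ) :
    DifferentiableOn ℝ (logRadiiSum p n) {x : Fin (n + 2) → ℝ | StrictMono x} ∧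
      ∀ x : Fin (n + 2) → ℝ, StrictMono x →
        ∑ i, x i * fderiv ℝ (logRadiiSum p n) x (Pi.single i 1) = (n : ℝ) + 2 := by
  refine ⟨fun x hx => (differentiableAt_logRadiiSum hx).differentiableWithinAt, fun x hx => ?_⟩
  rw [sum_mul_apply_single]
  exact fderiv_apply_self_eq_of_log_homogeneous (differentiableAt_logRadiiSum hx)
    fun t ht => logRadiiSum_smul hp.ne' hx ht
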